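/- arXiv:2003.12433 — 5 statements merged into one kernel-verified Lean document; each statement's English description precedes it below -/
import Mathlib

section
/- Let A : ℤ → M(d,ℝ) be bounded and admit an exponential dichotomy on ℕ with regular invariant projector P : ℕ → M(d,ℝ), constants K ≥ 1, α ∈ (0,1). Then the kernel of the operator L⁺ : ℓ_+^∞(ℝ^d) → ℓ_+^∞(ℝ^d), (L⁺φ)(n) = 1_ℕ(n)(φ(n+1) − A(n)φ(n)), equals {φ : φ(n) = Φ(n,0)x for n ∈ ℕ, φ(n) = 0 for n < 0, x ∈ im P(0)}. In particular, every φ ∈ ker L⁺ satisfies φ(0) ∈ im P(0) and φ(n) → 0 as n → ∞. -/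
/-- the kernel of `L⁺` on `ℓ_+^∞(ℝ^d)` for a system with an exponential
dichotomy on `ℕ` consists precisely of the forward orbits of points of `im P(0)`;
in particular such solutions tend to `0` at `+∞`. -/
theorem stmt_6 {d : ℕ}
    (A : ℤ → (EuclideanSpace ℝ (Fin d) →L[ℝ] EuclideanSpace ℝ (Fin d)))
    (hA : ∃ C, ∀ n, ‖A n‖ ≤ C)
    (Φ : ℕ → ℕ → (EuclideanSpace ℝ (Fin d) →L[ℝ] EuclideanSpace ℝ (Fin d)))
    (hΦ0 : ∀ n, Φ n n = 1)
    (hΦ1 : ∀ k n : ℕ, n ≤ k → Φ (k + 1) n = (A (k : ℤ)).comp (Φ k n))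
    (P : ℕ → (EuclideanSpace ℝ (Fin d) →L[ℝ] EuclideanSpace ℝ (Fin d)))
    (hproj : ∀ n, (P n).comp (P n) = P n)
    (hinva : ∀ n : ℕ, (P (n + 1)).comp (A (n : ℤ)) = (A (n : ℤ)).comp (P n))
    (hPbdd : ∃ C, ∀ n, ‖P n‖ ≤ C)
    (hreg : ∀ n : ℕ, Set.BijOn (A (n : ℤ)) {x | P n x = 0} {x | P (n + 1) x = 0})
    (K α : ℝ) (hK : 1 ≤ K) (hα : α ∈ Set.Ioo (0 : ℝ) 1)
    (hED1 : ∀ k n : ℕ, n ≤ k → ∀ x, ‖Φ k n (P n x)‖ ≤ K * α ^ (k - n) * ‖P n x‖)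
    (hED2 : ∀ k n : ℕ, n ≤ k → ∀ x,
      ‖Φ k n (x - P n x)‖ ≥ (1 / K) * (1 / α) ^ (k - n) * ‖x - P n x‖)
    (φ : ℤ → EuclideanSpace ℝ (Fin d))
    (hφbdd : ∃ C, ∀ n, ‖φ n‖ ≤ C)
    (hφsupp : ∀ n : ℤ, n < 0 → φ n = 0) :
    ((∀ n : ℕ, φ ((n : ℤ) + 1) = A (n : ℤ) (φ (n : ℤ))) ↔
        ∃ x, P 0 x = x ∧ ∀ n : ℕ, φ (n : ℤ) = Φ n 0 x) ∧
      ((∀ n : ℕ, φ ((n : ℤ) + 1) = A (n : ℤ) (φ (n : ℤ))) →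
        (P 0 (φ 0) = φ 0 ∧
          Filter.Tendsto (fun n : ℕ => φ (n : ℤ)) Filter.atTop (nhds 0))) := by
  have hα0 := hα.1
  have hα1 := hα.2
  have hK0 : (0:ℝ) < K := lt_of_lt_of_le one_pos hK
  obtain ⟨C, hC⟩ := hφbdd
  -- Main structural fact for solutions of the recurrence
  have key : (∀ n : ℕ, φ ((n : ℤ) + 1) = A (n : ℤ) (φ (n : ℤ))) →
      (∀ n : ℕ, φ (n : ℤ) = Φ n 0 (φ 0)) ∧ P 0 (φ 0) = φ 0 := by
    intro hrec
    have horb : ∀ n : ℕ, φ (n : ℤ) = Φ n 0 (φ 0) := by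
      intro n
      induction n with
      | zero => simp [hΦ0]
      | succ k ih =>
        have h1 : ((k : ℤ) + 1) = ((k + 1 : ℕ) : ℤ) := by push_cast; ring
        have h2 := hrec k
        rw [h1] at h2
        rw [h2, ih, hΦ1 k 0 (Nat.zero_le _)]
        rfl
    set v := φ 0 - P 0 (φ 0) with hv
    set M := C + K * ‖P 0 (φ 0)‖ with hM
    have hbound : ∀ k : ℕ, ‖v‖ ≤ K * α ^ k * M := by
      intro k
      have h2 := hED2 k 0 (Nat.zero_le k) (φ 0)
      rw [Nat.sub_zero] at h2
      have himg : Φ k 0 (φ 0 - P 0 (φ 0)) = φ (k : ℤ) - Φ k 0 (P 0 (φ 0)) := by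
        rw [map_sub, ← horb k]
      have h3 : ‖Φ k 0 (φ 0 - P 0 (φ 0))‖ ≤ M := by
        rw [himg]
        have h4 := norm_sub_le (φ (k : ℤ)) (Φ k 0 (P 0 (φ 0)))
        have h5 := hED1 k 0 (Nat.zero_le k) (φ 0)
        rw [Nat.sub_zero] at h5
        have hαk : α ^ k ≤ 1 := pow_le_one₀ hα0.le hα1.le
        have h6 : K * α ^ k * ‖P 0 (φ 0)‖ ≤ K * ‖P 0 (φ 0)‖ := by
          have := mul_le_of_le_one_right hK0.le hαk
          nlinarith [norm_nonneg (P 0 (φ 0))]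
        have h7 := hC (k : ℤ)
        rw [hM]
        linarith
      have h8 : (1 / K) * (1 / α) ^ k * ‖v‖ ≤ M := le_trans h2 h3
      have hαk0 : (0:ℝ) < α ^ k := pow_pos hα0 k
      have h9 : K * α ^ k * ((1 / K) * (1 / α) ^ k * ‖v‖) = ‖v‖ := by
        rw [one_div, one_div, inv_pow]
        field_simp
      calc ‖v‖ = K * α ^ k * ((1 / K) * (1 / α) ^ k * ‖v‖) := h9.symm
        _ ≤ K * α ^ k * M := by
            apply mul_le_mul_of_nonneg_left h8
            positivity
    have hlim : Filter.Tendsto (fun k : ℕ => K * α ^ k * M) Filter.atTop (nhds 0) := by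
      have h := (tendsto_pow_atTop_nhds_zero_of_lt_one hα0.le hα1).const_mul (K * M)
      rw [mul_zero] at h
      convert h using 2 with k
      ring
    have hle : ‖v‖ ≤ 0 := ge_of_tendsto' hlim hbound
    have hv0 : v = 0 := norm_le_zero_iff.mp hle
    have hP0 : P 0 (φ 0) = φ 0 := by
      have := sub_eq_zero.mp hv0
      exact this.symm
    exact ⟨horb, hP0⟩
  constructor
  · constructor
    · intro hrec
      obtain ⟨horb, hP0⟩ := key hrec
      exact ⟨φ 0, hP0, horb⟩
    · rintro ⟨x, hx, hφx⟩ n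
      have h1 : ((n : ℤ) + 1) = ((n + 1 : ℕ) : ℤ) := by push_cast; ring
      rw [h1, hφx (n + 1), hφx n, hΦ1 n 0 (Nat.zero_le _)]
      rfl
  · intro hrec
    obtain ⟨horb, hP0⟩ := key hrec
    refine ⟨hP0, ?_⟩
    rw [tendsto_zero_iff_norm_tendsto_zero]
    have hlim : Filter.Tendsto (fun k : ℕ => K * α ^ k * ‖φ 0‖) Filter.atTop (nhds 0) := by
      have h := (tendsto_pow_atTop_nhds_zero_of_lt_one hα0.le hα1).const_mul (K * ‖φ 0‖)
      rw [mul_zero] at h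
      convert h using 2 with k
      ring
    apply squeeze_zero (fun n => norm_nonneg _) _ hlim
    intro n
    have h5 := hED1 n 0 (Nat.zero_le n) (φ 0)
    rw [Nat.sub_zero, hP0] at h5
    rw [horb n]
    exact h5
end

section
/- Let A : ℤ → M(d,ℝ) admit an exponential dichotomy on ℕ with regular projector P, constants K ≥ 1, α ∈ (0,1). Define M : ℓ_+^∞(ℝ^d) → ℓ_+^∞(ℝ^d) by (Mφ)(n) = ∑_{k=0}^{n−1} Φ(n,k+1)P(k+1)φ(k) − ∑_{k=n}^∞ Φ(n,k+1)(I−P(k+1))φ(k) for n ≥ 0 and (Mφ)(n) = 0 for n < 0 (where Φ(n,k+1) on ker P(k+1) for n < k+1 denotes the inverse of the restriction). Then M is well-defined, bounded with ‖Mφ‖_∞ ≤ K(1+α)/(1−α)·(1 + sup_k ‖P(k)‖)·‖φ‖_∞, and L⁺ ∘ M = id, so that L⁺ is surjective on ℓ_+^∞(ℝ^d). -/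
/-! The stable part of `M φ` at `n` is a finite sum whose terms decay like `α ^ (n - k - 1)`;
the unstable part is a series whose terms decay like `α ^ (k + 1 - n)`, because the expansion
estimate on `ker P` inverts to a contraction estimate for `Ψ`. Both are dominated by geometric
series. For `L⁺ M = id`: `A n` maps the stable sum at `n` to the one at `n + 1` minus its new term
`P (n + 1) (φ n)`, and the unstable series at `n` to the one at `n + 1` plus its dropped term
`φ n - P (n + 1) (φ n)`. The key identity `A n ∘ Ψ n m = Ψ (n + 1) m` holds because both sides
take values in `ker P (n + 1)` and agree after applying `Φ m (n + 1)`, which is injective there. -/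

open Finset

section Series

variable {E : Type*} [NormedAddCommGroup E]

lemma hasSum_ite_le_iff (f : ℕ → E) (n : ℕ) (a : E) :
    HasSum (fun k => if n ≤ k then f k else 0) a ↔ HasSum (fun j => f (j + n)) a := by
  rw [← hasSum_nat_add_iff' n, sum_eq_zero fun k hk => if_neg (by simpa using hk), sub_zero]
  simp only [Nat.le_add_left, if_true]

lemma tsum_ite_le (f : ℕ → E) (n : ℕ) :
    ∑' k, (if n ≤ k then f k else 0) = ∑' j, f (j + n) :=
  tsum_eq_tsum_of_hasSum_iff_hasSum fun {a} => hasSum_ite_le_iff f n a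

lemma summable_ite_le_iff (f : ℕ → E) (n : ℕ) :
    Summable (fun k => if n ≤ k then f k else 0) ↔ Summable (fun j => f (j + n)) :=
  ⟨fun ⟨a, h⟩ => ⟨a, (hasSum_ite_le_iff f n a).mp h⟩,
    fun ⟨a, h⟩ => ⟨a, (hasSum_ite_le_iff f n a).mpr h⟩⟩

end Series

section Dichotomy

variable {E : Type*} [NormedAddCommGroup E] [NormedSpace ℝ E]
  {A : ℕ → E →L[ℝ] E} {Φ Ψ : ℕ → ℕ → E →L[ℝ] E} {P : ℕ → E →L[ℝ] E} {K α : ℝ}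

lemma le_mul_pow_of_inv_mul_pow_le {a b : ℝ} (hK : 0 < K) (hα : 0 < α) (j : ℕ)
    (h : 1 / K * (1 / α) ^ j * a ≤ b) : a ≤ K * α ^ j * b := by
  calc a = K * α ^ j * (1 / K * (1 / α) ^ j * a) := by field_simp; rw [one_div_pow]; field_simp
    _ ≤ K * α ^ j * b := by gcongr

lemma norm_sub_apply_le {T : E →L[ℝ] E} {C : ℝ} (hT : ‖T‖ ≤ C) (x : E) :
    ‖x - T x‖ ≤ (1 + C) * ‖x‖ :=
  calc ‖x - T x‖ ≤ ‖x‖ + ‖T x‖ := norm_sub_le _ _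
    _ ≤ ‖x‖ + C * ‖x‖ := by gcongr; exact T.le_of_opNorm_le hT x
    _ = (1 + C) * ‖x‖ := by ring

lemma Φ_succ_self (hΦ0 : ∀ n, Φ n n = 1)
    (hΦ1 : ∀ k n : ℕ, n ≤ k → Φ (k + 1) n = (A k).comp (Φ k n)) (n : ℕ) :
    Φ (n + 1) n = A n := by
  rw [hΦ1 n n le_rfl, hΦ0]; rfl

lemma Φ_apply_A (hΦ0 : ∀ n, Φ n n = 1)
    (hΦ1 : ∀ k n : ℕ, n ≤ k → Φ (k + 1) n = (A k).comp (Φ k n))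
    {n m : ℕ} (hnm : n + 1 ≤ m) (x : E) : Φ m (n + 1) (A n x) = Φ m n x := by
  induction m, hnm using Nat.le_induction with
  | base => rw [hΦ0, Φ_succ_self hΦ0 hΦ1]; rfl
  | succ m hm ih =>
    rw [hΦ1 m (n + 1) hm, hΦ1 m n (by omega), ContinuousLinearMap.comp_apply,
      ContinuousLinearMap.comp_apply, ih]

lemma eq_zero_of_Φ_eq_zero (hK : 0 < K) (hα : 0 < α)
    (hED2 : ∀ k n : ℕ, n ≤ k → ∀ x,
      ‖Φ k n (x - P n x)‖ ≥ (1 / K) * (1 / α) ^ (k - n) * ‖x - P n x‖)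
    {k m : ℕ} (hkm : k ≤ m) {y : E} (hPy : P k y = 0) (hΦy : Φ m k y = 0) : y = 0 := by
  have h := hED2 m k hkm y
  rw [hPy, sub_zero, hΦy, norm_zero] at h
  exact norm_le_zero_iff.mp (by simpa using le_mul_pow_of_inv_mul_pow_le hK hα _ h)

lemma norm_Ψ_le (hK : 0 < K) (hα : 0 < α)
    (hED2 : ∀ k n : ℕ, n ≤ k → ∀ x,
      ‖Φ k n (x - P n x)‖ ≥ (1 / K) * (1 / α) ^ (k - n) * ‖x - P n x‖)
    (hΨ1 : ∀ n m : ℕ, n ≤ m → ∀ x, Φ m n (Ψ n m x) = x - P m x)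
    (hΨ2 : ∀ n m : ℕ, n ≤ m → ∀ x, P n (Ψ n m x) = 0)
    {n m : ℕ} (hnm : n ≤ m) (x : E) : ‖Ψ n m x‖ ≤ K * α ^ (m - n) * ‖x - P m x‖ := by
  have h := hED2 m n hnm (Ψ n m x)
  rw [hΨ2 n m hnm x, sub_zero, hΨ1 n m hnm x] at h
  exact le_mul_pow_of_inv_mul_pow_le hK hα _ h

lemma A_Ψ_self (hΦ0 : ∀ n, Φ n n = 1)
    (hΦ1 : ∀ k n : ℕ, n ≤ k → Φ (k + 1) n = (A k).comp (Φ k n))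
    (hΨ1 : ∀ n m : ℕ, n ≤ m → ∀ x, Φ m n (Ψ n m x) = x - P m x) (n : ℕ) (x : E) :
    A n (Ψ n (n + 1) x) = x - P (n + 1) x := by
  rw [← Φ_succ_self hΦ0 hΦ1, hΨ1 n (n + 1) n.le_succ]

lemma A_Ψ (hK : 0 < K) (hα : 0 < α) (hΦ0 : ∀ n, Φ n n = 1)
    (hΦ1 : ∀ k n : ℕ, n ≤ k → Φ (k + 1) n = (A k).comp (Φ k n))
    (hinva : ∀ n : ℕ, (P (n + 1)).comp (A n) = (A n).comp (P n))
    (hED2 : ∀ k n : ℕ, n ≤ k → ∀ x,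
      ‖Φ k n (x - P n x)‖ ≥ (1 / K) * (1 / α) ^ (k - n) * ‖x - P n x‖)
    (hΨ1 : ∀ n m : ℕ, n ≤ m → ∀ x, Φ m n (Ψ n m x) = x - P m x)
    (hΨ2 : ∀ n m : ℕ, n ≤ m → ∀ x, P n (Ψ n m x) = 0)
    {n m : ℕ} (hnm : n + 1 ≤ m) (x : E) : A n (Ψ n m x) = Ψ (n + 1) m x := by
  have hP : P (n + 1) (A n (Ψ n m x) - Ψ (n + 1) m x) = 0 := by
    rw [map_sub, hΨ2 (n + 1) m hnm, sub_zero, ← ContinuousLinearMap.comp_apply, hinva,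
      ContinuousLinearMap.comp_apply, hΨ2 n m (by omega), map_zero]
  have hΦ : Φ m (n + 1) (A n (Ψ n m x) - Ψ (n + 1) m x) = 0 := by
    rw [map_sub, Φ_apply_A hΦ0 hΦ1 hnm, hΨ1 n m (by omega), hΨ1 (n + 1) m hnm, sub_self]
  exact sub_eq_zero.mp (eq_zero_of_Φ_eq_zero hK hα hED2 hnm hP hΦ)

end Dichotomy

section Green

variable {E : Type*} [NormedAddCommGroup E] [NormedSpace ℝ E]
  {A : ℕ → E →L[ℝ] E} {Φ Ψ : ℕ → ℕ → E →L[ℝ] E} {P : ℕ → E →L[ℝ] E} {K α CP C : ℝ}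
  {ψ : ℕ → E}

lemma norm_stable_sum_le (hK : 0 ≤ K) (hα0 : 0 ≤ α) (hα1 : α < 1) (hCP : ∀ n, ‖P n‖ ≤ CP)
    (hED1 : ∀ k n : ℕ, n ≤ k → ∀ x, ‖Φ k n (P n x)‖ ≤ K * α ^ (k - n) * ‖P n x‖)
    (hψ : ∀ k, ‖ψ k‖ ≤ C) (n : ℕ) :
    ‖∑ k ∈ range n, Φ n (k + 1) (P (k + 1) (ψ k))‖ ≤ K * CP * C * (1 - α)⁻¹ := by
  have hCP0 : 0 ≤ CP := (norm_nonneg _).trans (hCP 0)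
  have hC0 : 0 ≤ C := (norm_nonneg _).trans (hψ 0)
  have hterm : ∀ k ∈ range n,
      ‖Φ n (k + 1) (P (k + 1) (ψ k))‖ ≤ K * CP * C * α ^ (n - 1 - k) := by
    intro k hk
    have hkn : k + 1 ≤ n := mem_range.mp hk
    have hPψ : ‖P (k + 1) (ψ k)‖ ≤ CP * C :=
      ((P (k + 1)).le_of_opNorm_le (hCP _) _).trans (by gcongr; exact hψ k)
    calc ‖Φ n (k + 1) (P (k + 1) (ψ k))‖ ≤ K * α ^ (n - (k + 1)) * ‖P (k + 1) (ψ k)‖ :=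
          hED1 n (k + 1) hkn _
      _ ≤ K * α ^ (n - (k + 1)) * (CP * C) := by gcongr
      _ = K * CP * C * α ^ (n - 1 - k) := by rw [Nat.sub_sub, add_comm 1 k]; ring
  calc ‖∑ k ∈ range n, Φ n (k + 1) (P (k + 1) (ψ k))‖
      ≤ ∑ k ∈ range n, K * CP * C * α ^ (n - 1 - k) := norm_sum_le_of_le _ hterm
    _ = K * CP * C * ∑ j ∈ range n, α ^ j := by
      rw [← mul_sum, sum_range_reflect (fun j => α ^ j) n]
    _ ≤ K * CP * C * (1 - α)⁻¹ := by
      gcongr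
      exact sum_le_hasSum _ (fun _ _ => by positivity) (hasSum_geometric_of_lt_one hα0 hα1)

lemma norm_unstable_term_le (hK : 0 < K) (hα : 0 < α) (hCP : ∀ n, ‖P n‖ ≤ CP)
    (hED2 : ∀ k n : ℕ, n ≤ k → ∀ x,
      ‖Φ k n (x - P n x)‖ ≥ (1 / K) * (1 / α) ^ (k - n) * ‖x - P n x‖)
    (hΨ1 : ∀ n m : ℕ, n ≤ m → ∀ x, Φ m n (Ψ n m x) = x - P m x)
    (hΨ2 : ∀ n m : ℕ, n ≤ m → ∀ x, P n (Ψ n m x) = 0)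
    (hψ : ∀ k, ‖ψ k‖ ≤ C) (n j : ℕ) :
    ‖Ψ n (j + n + 1) (ψ (j + n))‖ ≤ K * (1 + CP) * C * α * α ^ j := by
  have hCP0 : 0 ≤ CP := (norm_nonneg _).trans (hCP 0)
  calc ‖Ψ n (j + n + 1) (ψ (j + n))‖
      ≤ K * α ^ (j + n + 1 - n) * ‖ψ (j + n) - P (j + n + 1) (ψ (j + n))‖ :=
        norm_Ψ_le hK hα hED2 hΨ1 hΨ2 (by omega) _
    _ ≤ K * α ^ (j + n + 1 - n) * ((1 + CP) * C) := by
        gcongr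
        exact (norm_sub_apply_le (hCP _) _).trans (by gcongr; exact hψ _)
    _ = K * (1 + CP) * C * α * α ^ j := by
        rw [show j + n + 1 - n = j + 1 by omega, pow_succ]; ring

lemma summable_unstable_terms [CompleteSpace E] (hK : 0 < K) (hα0 : 0 < α) (hα1 : α < 1)
    (hCP : ∀ n, ‖P n‖ ≤ CP)
    (hED2 : ∀ k n : ℕ, n ≤ k → ∀ x,
      ‖Φ k n (x - P n x)‖ ≥ (1 / K) * (1 / α) ^ (k - n) * ‖x - P n x‖)
    (hΨ1 : ∀ n m : ℕ, n ≤ m → ∀ x, Φ m n (Ψ n m x) = x - P m x)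
    (hΨ2 : ∀ n m : ℕ, n ≤ m → ∀ x, P n (Ψ n m x) = 0)
    (hψ : ∀ k, ‖ψ k‖ ≤ C) (n : ℕ) :
    Summable fun k => if n ≤ k then Ψ n (k + 1) (ψ k) else 0 :=
  (summable_ite_le_iff _ n).mpr <|
    .of_norm_bounded ((summable_geometric_of_lt_one hα0.le hα1).mul_left _)
      (norm_unstable_term_le hK hα0 hCP hED2 hΨ1 hΨ2 hψ n)

lemma norm_unstable_tsum_le (hK : 0 < K) (hα0 : 0 < α) (hα1 : α < 1)
    (hCP : ∀ n, ‖P n‖ ≤ CP)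
    (hED2 : ∀ k n : ℕ, n ≤ k → ∀ x,
      ‖Φ k n (x - P n x)‖ ≥ (1 / K) * (1 / α) ^ (k - n) * ‖x - P n x‖)
    (hΨ1 : ∀ n m : ℕ, n ≤ m → ∀ x, Φ m n (Ψ n m x) = x - P m x)
    (hΨ2 : ∀ n m : ℕ, n ≤ m → ∀ x, P n (Ψ n m x) = 0)
    (hψ : ∀ k, ‖ψ k‖ ≤ C) (n : ℕ) :
    ‖∑' k, if n ≤ k then Ψ n (k + 1) (ψ k) else 0‖ ≤ K * (1 + CP) * C * α * (1 - α)⁻¹ := by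
  rw [tsum_ite_le]
  exact tsum_of_norm_bounded ((hasSum_geometric_of_lt_one hα0.le hα1).mul_left _)
    (norm_unstable_term_le hK hα0 hCP hED2 hΨ1 hΨ2 hψ n)

lemma A_stable_sum (hΦ0 : ∀ n, Φ n n = 1)
    (hΦ1 : ∀ k n : ℕ, n ≤ k → Φ (k + 1) n = (A k).comp (Φ k n)) (n : ℕ) :
    A n (∑ k ∈ range n, Φ n (k + 1) (P (k + 1) (ψ k))) =
      ∑ k ∈ range (n + 1), Φ (n + 1) (k + 1) (P (k + 1) (ψ k)) - P (n + 1) (ψ n) := by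
  rw [map_sum, sum_range_succ, hΦ0, one_apply_eq_self, add_sub_cancel_right]
  refine sum_congr rfl fun k hk => ?_
  rw [hΦ1 n (k + 1) (mem_range.mp hk)]
  rfl

lemma A_unstable_tsum (hK : 0 < K) (hα : 0 < α) (hΦ0 : ∀ n, Φ n n = 1)
    (hΦ1 : ∀ k n : ℕ, n ≤ k → Φ (k + 1) n = (A k).comp (Φ k n))
    (hinva : ∀ n : ℕ, (P (n + 1)).comp (A n) = (A n).comp (P n))
    (hED2 : ∀ k n : ℕ, n ≤ k → ∀ x,
      ‖Φ k n (x - P n x)‖ ≥ (1 / K) * (1 / α) ^ (k - n) * ‖x - P n x‖)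
    (hΨ1 : ∀ n m : ℕ, n ≤ m → ∀ x, Φ m n (Ψ n m x) = x - P m x)
    (hΨ2 : ∀ n m : ℕ, n ≤ m → ∀ x, P n (Ψ n m x) = 0) {n : ℕ}
    (hs : Summable fun k => if n ≤ k then Ψ n (k + 1) (ψ k) else 0) :
    A n (∑' k, if n ≤ k then Ψ n (k + 1) (ψ k) else 0) =
      (∑' k, if n + 1 ≤ k then Ψ (n + 1) (k + 1) (ψ k) else 0) + (ψ n - P (n + 1) (ψ n)) := by
  rw [summable_ite_le_iff] at hs
  rw [tsum_ite_le, tsum_ite_le, hs.tsum_eq_zero_add, map_add, zero_add,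
    A_Ψ_self hΦ0 hΦ1 hΨ1, (A n).map_tsum ((summable_nat_add_iff 1).mpr hs), add_comm]
  congr 2
  funext j
  rw [show j + 1 + n = j + (n + 1) by ring,
    A_Ψ hK hα hΦ0 hΦ1 hinva hED2 hΨ1 hΨ2 (by omega)]

end Green

/-- `Ψ n m` models `Φ(n,m)(I - P(m))` for `n ≤ m`, i.e. the inverse of the restriction of
`Φ(m,n)` to `ker P(n)` composed with `I - P(m)`. -/
theorem stmt_7_general {d : ℕ}
    (A : ℤ → (EuclideanSpace ℝ (Fin d) →L[ℝ] EuclideanSpace ℝ (Fin d)))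
    (Φ : ℕ → ℕ → (EuclideanSpace ℝ (Fin d) →L[ℝ] EuclideanSpace ℝ (Fin d)))
    (hΦ0 : ∀ n, Φ n n = 1)
    (hΦ1 : ∀ k n : ℕ, n ≤ k → Φ (k + 1) n = (A (k : ℤ)).comp (Φ k n))
    (P : ℕ → (EuclideanSpace ℝ (Fin d) →L[ℝ] EuclideanSpace ℝ (Fin d)))
    (hinva : ∀ n : ℕ, (P (n + 1)).comp (A (n : ℤ)) = (A (n : ℤ)).comp (P n))
    (CP : ℝ) (hCP : ∀ n, ‖P n‖ ≤ CP)
    (K α : ℝ) (hK : 1 ≤ K) (hα : α ∈ Set.Ioo (0 : ℝ) 1)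
    (hED1 : ∀ k n : ℕ, n ≤ k → ∀ x, ‖Φ k n (P n x)‖ ≤ K * α ^ (k - n) * ‖P n x‖)
    (hED2 : ∀ k n : ℕ, n ≤ k → ∀ x,
      ‖Φ k n (x - P n x)‖ ≥ (1 / K) * (1 / α) ^ (k - n) * ‖x - P n x‖)
    (Ψ : ℕ → ℕ → (EuclideanSpace ℝ (Fin d) →L[ℝ] EuclideanSpace ℝ (Fin d)))
    (hΨ1 : ∀ n m : ℕ, n ≤ m → ∀ x, Φ m n (Ψ n m x) = x - P m x)
    (hΨ2 : ∀ n m : ℕ, n ≤ m → ∀ x, P n (Ψ n m x) = 0) :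
    ∀ (φ : ℤ → EuclideanSpace ℝ (Fin d)) (Cφ : ℝ),
      (∀ n, ‖φ n‖ ≤ Cφ) → (∀ n : ℤ, n < 0 → φ n = 0) →
      (∀ n : ℕ, Summable fun k : ℕ => if n ≤ k then Ψ n (k + 1) (φ (k : ℤ)) else 0) ∧
      ∀ M : ℤ → EuclideanSpace ℝ (Fin d),
        (∀ n : ℤ, n < 0 → M n = 0) →
        (∀ n : ℕ, M (n : ℤ) =
          (∑ k ∈ Finset.range n, Φ n (k + 1) (P (k + 1) (φ (k : ℤ)))) -
            ∑' k : ℕ, if n ≤ k then Ψ n (k + 1) (φ (k : ℤ)) else 0) →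
        (∀ n : ℤ, ‖M n‖ ≤ K * (1 + α) / (1 - α) * (1 + CP) * Cφ) ∧
        (∀ n : ℕ, M ((n : ℤ) + 1) - A (n : ℤ) (M (n : ℤ)) = φ (n : ℤ)) := by
  intro φ Cφ hφ _
  obtain ⟨hα0, hα1⟩ := hα
  have hK0 : 0 < K := one_pos.trans_le hK
  have hψ : ∀ k : ℕ, ‖φ k‖ ≤ Cφ := fun k => hφ k
  have hsum := summable_unstable_terms hK0 hα0 hα1 hCP hED2 hΨ1 hΨ2 hψ
  refine ⟨hsum, fun M hMneg hM => ⟨fun n => ?_, fun n => ?_⟩⟩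
  · have hC0 : 0 ≤ Cφ := (norm_nonneg _).trans (hφ 0)
    have hCP0 : 0 ≤ CP := (norm_nonneg _).trans (hCP 0)
    have h1α : 0 < 1 - α := by linarith
    rcases lt_or_ge n 0 with hn | hn
    · rw [hMneg n hn, norm_zero]
      positivity
    lift n to ℕ using hn
    calc ‖M n‖
        ≤ K * CP * Cφ * (1 - α)⁻¹ + K * (1 + CP) * Cφ * α * (1 - α)⁻¹ := by
          rw [hM n]
          exact (norm_sub_le _ _).trans (add_le_add
            (norm_stable_sum_le hK0.le hα0.le hα1 hCP hED1 hψ n)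
            (norm_unstable_tsum_le hK0 hα0 hα1 hCP hED2 hΨ1 hΨ2 hψ n))
      _ ≤ K * (1 + α) / (1 - α) * (1 + CP) * Cφ := by
          rw [div_eq_mul_inv]
          have : 0 ≤ K * Cφ * (1 - α)⁻¹ := by positivity
          nlinarith
  · rw [show (n : ℤ) + 1 = ((n + 1 : ℕ) : ℤ) by push_cast; rfl, hM, hM, map_sub,
      A_stable_sum (A := fun n : ℕ => A n) hΦ0 hΦ1,
      A_unstable_tsum (A := fun n : ℕ => A n) hK0 hα0 hΦ0 hΦ1 hinva hED2 hΨ1 hΨ2 (hsum n)]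
    abel

/-- the Green's function operator `M` is well defined, bounded with the
stated norm estimate, and is a right inverse of `L⁺`, so `L⁺` is surjective on
`ℓ_+^∞(ℝ^d)`. Here `Ψ n m` encodes `Φ(n,m)(I-P(m))` for `n ≤ m`, i.e. the inverse of
the restriction of `Φ(m,n)` to `ker P(n)` composed with `I - P(m)`. -/
theorem stmt_7 {d : ℕ}
    (A : ℤ → (EuclideanSpace ℝ (Fin d) →L[ℝ] EuclideanSpace ℝ (Fin d)))
    (hA : ∃ C, ∀ n, ‖A n‖ ≤ C)
    (Φ : ℕ → ℕ → (EuclideanSpace ℝ (Fin d) →L[ℝ] EuclideanSpace ℝ (Fin d)))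
    (hΦ0 : ∀ n, Φ n n = 1)
    (hΦ1 : ∀ k n : ℕ, n ≤ k → Φ (k + 1) n = (A (k : ℤ)).comp (Φ k n))
    (P : ℕ → (EuclideanSpace ℝ (Fin d) →L[ℝ] EuclideanSpace ℝ (Fin d)))
    (hproj : ∀ n, (P n).comp (P n) = P n)
    (hinva : ∀ n : ℕ, (P (n + 1)).comp (A (n : ℤ)) = (A (n : ℤ)).comp (P n))
    (CP : ℝ) (hCP : ∀ n, ‖P n‖ ≤ CP)
    (hreg : ∀ n : ℕ, Set.BijOn (A (n : ℤ)) {x | P n x = 0} {x | P (n + 1) x = 0})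
    (K α : ℝ) (hK : 1 ≤ K) (hα : α ∈ Set.Ioo (0 : ℝ) 1)
    (hED1 : ∀ k n : ℕ, n ≤ k → ∀ x, ‖Φ k n (P n x)‖ ≤ K * α ^ (k - n) * ‖P n x‖)
    (hED2 : ∀ k n : ℕ, n ≤ k → ∀ x,
      ‖Φ k n (x - P n x)‖ ≥ (1 / K) * (1 / α) ^ (k - n) * ‖x - P n x‖)
    (Ψ : ℕ → ℕ → (EuclideanSpace ℝ (Fin d) →L[ℝ] EuclideanSpace ℝ (Fin d)))
    (hΨ1 : ∀ n m : ℕ, n ≤ m → ∀ x, Φ m n (Ψ n m x) = x - P m x)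
    (hΨ2 : ∀ n m : ℕ, n ≤ m → ∀ x, P n (Ψ n m x) = 0) :
    ∀ (φ : ℤ → EuclideanSpace ℝ (Fin d)) (Cφ : ℝ),
      (∀ n, ‖φ n‖ ≤ Cφ) → (∀ n : ℤ, n < 0 → φ n = 0) →
      (∀ n : ℕ, Summable fun k : ℕ => if n ≤ k then Ψ n (k + 1) (φ (k : ℤ)) else 0) ∧
      ∀ M : ℤ → EuclideanSpace ℝ (Fin d),
        (∀ n : ℤ, n < 0 → M n = 0) →
        (∀ n : ℕ, M (n : ℤ) =
          (∑ k ∈ Finset.range n, Φ n (k + 1) (P (k + 1) (φ (k : ℤ)))) -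
            ∑' k : ℕ, if n ≤ k then Ψ n (k + 1) (φ (k : ℤ)) else 0) →
        (∀ n : ℤ, ‖M n‖ ≤ K * (1 + α) / (1 - α) * (1 + CP) * Cφ) ∧
        (∀ n : ℕ, M ((n : ℤ) + 1) - A (n : ℤ) (M (n : ℤ)) = φ (n : ℤ)) :=
  stmt_7_general A Φ hΦ0 hΦ1 P hinva CP hCP K α hK hα hED1 hED2 Ψ hΨ1 hΨ2
end

section
/- Let A : ℤ → M(d,ℝ) admit an exponential dichotomy on ℤ_κ^− = {n ≤ κ} with regular projector P : ℤ_κ^− → M(d,ℝ), K ≥ 1, α ∈ (0,1). Then the kernel of the operator L⁻_κ : ℓ⁻_{0κ}(ℝ^d) → ℓ⁻_{0,κ−1}(ℝ^d), (L⁻_κφ)(n) = 1_{n ≤ κ−1}(φ(n+1) − A(n)φ(n)), is {φ : φ(n) = Φ(n,κ)x for n ≤ κ, x ∈ ker P(κ)}, where Φ(n,κ) for n ≤ κ on ker P(κ) denotes the inverse of Φ(κ,n)|ker P(n). In particular ker L⁻_κ is linearly isomorphic to ker P(κ), so dim ker L⁻_κ = dim ker P(κ). -/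
/-!
A solution of `φ (n + 1) = A n (φ n)` on `n < κ` is a trajectory of the evolution operator `Φ`,
and `Φ` commutes with the invariant projector, so `P n (φ n) = Φ n m (P m (φ m))`; the stable
estimate bounds this by `K * C * ‖φ m‖` for every `m ≤ n`, and letting `m → -∞` kills it.
Conversely, if every `φ n` lies in `ker P n` and is carried to `φ κ` by `Φ κ n`, then the defect
`φ (n + 1) - A n (φ n)` lies in `ker P (n + 1)` and is annihilated by `Φ κ (n + 1)`, so the
unstable estimate forces it to vanish.
-/

open Filter Topology

section Evolution

variable {R M : Type*} [Semiring R] [TopologicalSpace M] [AddCommMonoid M] [Module R M]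
  {A : ℤ → M →L[R] M} {Φ : ℤ → ℤ → M →L[R] M}

theorem evolution_apply_eq_of_solution (hΦ0 : ∀ n, Φ n n = 1)
    (hΦ1 : ∀ k n : ℤ, n ≤ k → Φ (k + 1) n = (A k).comp (Φ k n)) {φ : ℤ → M} {m n : ℤ}
    (hmn : m ≤ n) (hφ : ∀ k, m ≤ k → k < n → φ (k + 1) = A k (φ k)) :
    Φ n m (φ m) = φ n := by
  induction n, hmn using Int.leInduction with
  | base => simp [hΦ0]
  | succ n hmn ih =>
    rw [hΦ1 n m hmn, ContinuousLinearMap.comp_apply,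
      ih fun k hmk hkn => hφ k hmk (by omega), hφ n hmn (by omega)]

theorem evolution_apply_step (hΦ0 : ∀ n, Φ n n = 1)
    (hΦ1 : ∀ k n : ℤ, n ≤ k → Φ (k + 1) n = (A k).comp (Φ k n)) {n k : ℤ} (hnk : n + 1 ≤ k)
    (x : M) : Φ k (n + 1) (A n x) = Φ k n x := by
  have hstep : Φ (n + 1) n x = A n x := by simp [hΦ1 n n le_rfl, hΦ0]
  rw [← hstep]
  exact evolution_apply_eq_of_solution (φ := fun j => Φ j n x) hΦ0 hΦ1 hnk
    fun j hj _ => by simp [hΦ1 j n (by omega)]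

theorem evolution_apply_proj {P : ℤ → M →L[R] M} {κ : ℤ} (hΦ0 : ∀ n, Φ n n = 1)
    (hΦ1 : ∀ k n : ℤ, n ≤ k → Φ (k + 1) n = (A k).comp (Φ k n))
    (hinv : ∀ n : ℤ, n + 1 ≤ κ → (P (n + 1)).comp (A n) = (A n).comp (P n))
    {m n : ℤ} (hmn : m ≤ n) (hnκ : n ≤ κ) (x : M) :
    Φ n m (P m x) = P n (Φ n m x) := by
  have h := evolution_apply_eq_of_solution (φ := fun j => P j (Φ j m x)) hΦ0 hΦ1 hmn
    fun k hmk hkn => by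
      simp only [hΦ1 k m hmk, ContinuousLinearMap.comp_apply]
      exact congrArg (· (Φ k m x)) (hinv k (by omega))
  simpa [hΦ0] using h

end Evolution

section Dichotomy

variable {𝕜 E : Type*} [NontriviallyNormedField 𝕜] [NormedAddCommGroup E] [NormedSpace 𝕜 E]

theorem eq_zero_of_norm_le_mul_norm_of_tendsto_atBot {v : E} {φ : ℤ → E} {C : ℝ} {n : ℤ}
    (hle : ∀ m ≤ n, ‖v‖ ≤ C * ‖φ m‖) (hφ : Tendsto φ atBot (𝓝 0)) : v = 0 := by
  have hlim : Tendsto (fun m => C * ‖φ m‖) atBot (𝓝 0) := by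
    simpa using hφ.norm.const_mul C
  exact norm_le_zero_iff.mp (ge_of_tendsto hlim (eventually_atBot.mpr ⟨n, hle⟩))

variable {A : ℤ → E →L[𝕜] E} {Φ : ℤ → ℤ → E →L[𝕜] E} {P : ℤ → E →L[𝕜] E} {κ : ℤ} {K α : ℝ}

theorem proj_apply_eq_zero_of_solution (hΦ0 : ∀ n, Φ n n = 1)
    (hΦ1 : ∀ k n : ℤ, n ≤ k → Φ (k + 1) n = (A k).comp (Φ k n))
    (hinv : ∀ n : ℤ, n + 1 ≤ κ → (P (n + 1)).comp (A n) = (A n).comp (P n))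
    (hPbdd : ∃ C, ∀ n ≤ κ, ‖P n‖ ≤ C) (hK : 0 ≤ K) (hα0 : 0 < α) (hα1 : α ≤ 1)
    (hED1 : ∀ k n : ℤ, n ≤ k → k ≤ κ → ∀ x, ‖Φ k n (P n x)‖ ≤ K * α ^ (k - n) * ‖P n x‖)
    {φ : ℤ → E} (hφ : ∀ n : ℤ, n < κ → φ (n + 1) = A n (φ n))
    (hφ0 : Tendsto φ atBot (𝓝 0)) {n : ℤ} (hn : n ≤ κ) : P n (φ n) = 0 := by
  obtain ⟨C, hC⟩ := hPbdd
  refine eq_zero_of_norm_le_mul_norm_of_tendsto_atBot (C := K * C) (n := n) (fun m hmn => ?_) hφ0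
  have htraj : Φ n m (P m (φ m)) = P n (φ n) := by
    rw [evolution_apply_proj hΦ0 hΦ1 hinv hmn hn,
      evolution_apply_eq_of_solution hΦ0 hΦ1 hmn fun k _ hkn => hφ k (by omega)]
  calc ‖P n (φ n)‖ = ‖Φ n m (P m (φ m))‖ := by rw [htraj]
    _ ≤ K * α ^ (n - m) * ‖P m (φ m)‖ := hED1 n m hmn hn _
    _ ≤ K * 1 * (C * ‖φ m‖) := by
        gcongr
        · exact zpow_le_one₀ hα0 hα1 (by omega)
        · exact (P m).le_of_opNorm_le (hC m (by omega)) _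
    _ = K * C * ‖φ m‖ := by ring

theorem eq_zero_of_proj_eq_zero_of_evolution_eq_zero (hK : 0 < K) (hα : 0 < α)
    (hED2 : ∀ k n : ℤ, n ≤ k → k ≤ κ → ∀ x,
      ‖Φ k n (x - P n x)‖ ≥ (1 / K) * (1 / α) ^ (k - n) * ‖x - P n x‖)
    {k n : ℤ} (hnk : n ≤ k) (hkκ : k ≤ κ) {x : E} (hPx : P n x = 0) (hΦx : Φ k n x = 0) :
    x = 0 := by
  have hbound := hED2 k n hnk hkκ x
  rw [hPx, sub_zero, hΦx, norm_zero] at hbound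
  have hc : 0 < (1 / K) * (1 / α) ^ (k - n) := by positivity
  exact norm_le_zero_iff.mp (nonpos_of_mul_nonpos_right hbound hc)

theorem solution_of_proj_eq_zero_of_evolution_eq (hΦ0 : ∀ n, Φ n n = 1)
    (hΦ1 : ∀ k n : ℤ, n ≤ k → Φ (k + 1) n = (A k).comp (Φ k n))
    (hinv : ∀ n : ℤ, n + 1 ≤ κ → (P (n + 1)).comp (A n) = (A n).comp (P n))
    (hK : 0 < K) (hα : 0 < α)
    (hED2 : ∀ k n : ℤ, n ≤ k → k ≤ κ → ∀ x,
      ‖Φ k n (x - P n x)‖ ≥ (1 / K) * (1 / α) ^ (k - n) * ‖x - P n x‖)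
    {φ : ℤ → E} (hφ : ∀ n ≤ κ, P n (φ n) = 0 ∧ Φ κ n (φ n) = φ κ) {n : ℤ} (hn : n < κ) :
    φ (n + 1) = A n (φ n) := by
  obtain ⟨hPn, hΦn⟩ := hφ n hn.le
  obtain ⟨hPn1, hΦn1⟩ := hφ (n + 1) (by omega)
  have hAP : P (n + 1) (A n (φ n)) = A n (P n (φ n)) :=
    congrArg (· (φ n)) (hinv n (by omega))
  refine sub_eq_zero.mp (eq_zero_of_proj_eq_zero_of_evolution_eq_zero hK hα hED2
    (by omega : n + 1 ≤ κ) le_rfl ?_ ?_)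
  · simp [hPn1, hAP, hPn]
  · simp [hΦn1, evolution_apply_step hΦ0 hΦ1 (by omega : n + 1 ≤ κ), hΦn]

end Dichotomy

theorem stmt_8_general {d : ℕ} (κ : ℤ)
    (A : ℤ → (EuclideanSpace ℝ (Fin d) →L[ℝ] EuclideanSpace ℝ (Fin d)))
    (Φ : ℤ → ℤ → (EuclideanSpace ℝ (Fin d) →L[ℝ] EuclideanSpace ℝ (Fin d)))
    (hΦ0 : ∀ n, Φ n n = 1)
    (hΦ1 : ∀ k n : ℤ, n ≤ k → Φ (k + 1) n = (A k).comp (Φ k n))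
    (P : ℤ → (EuclideanSpace ℝ (Fin d) →L[ℝ] EuclideanSpace ℝ (Fin d)))
    (hinva : ∀ n : ℤ, n + 1 ≤ κ → (P (n + 1)).comp (A n) = (A n).comp (P n))
    (hPbdd : ∃ C, ∀ n ≤ κ, ‖P n‖ ≤ C)
    (K α : ℝ) (hK : 1 ≤ K) (hα : α ∈ Set.Ioo (0 : ℝ) 1)
    (hED1 : ∀ k n : ℤ, n ≤ k → k ≤ κ → ∀ x,
      ‖Φ k n (P n x)‖ ≤ K * α ^ (k - n) * ‖P n x‖)
    (hED2 : ∀ k n : ℤ, n ≤ k → k ≤ κ → ∀ x,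
      ‖Φ k n (x - P n x)‖ ≥ (1 / K) * (1 / α) ^ (k - n) * ‖x - P n x‖)
    (φ : ℤ → EuclideanSpace ℝ (Fin d))
    (hφ0 : Filter.Tendsto φ Filter.atBot (nhds 0)) :
    (∀ n : ℤ, n < κ → φ (n + 1) = A n (φ n)) ↔
      (P κ (φ κ) = 0 ∧ ∀ n ≤ κ, P n (φ n) = 0 ∧ Φ κ n (φ n) = φ κ) := by
  obtain ⟨hα0, hα1⟩ := hα
  constructor
  · intro hφ
    have hstable n (hn : n ≤ κ) : P n (φ n) = 0 :=
      proj_apply_eq_zero_of_solution hΦ0 hΦ1 hinva hPbdd (by linarith) hα0 hα1.le hED1 hφ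
        hφ0 hn
    exact ⟨hstable κ le_rfl, fun n hn => ⟨hstable n hn,
      evolution_apply_eq_of_solution hΦ0 hΦ1 hn fun k _ hkκ => hφ k hkκ⟩⟩
  · rintro ⟨-, hφ⟩ n hn
    exact solution_of_proj_eq_zero_of_evolution_eq hΦ0 hΦ1 hinva (by linarith) hα0 hED2 hφ hn

/-- kernel characterization for the negative half-line operator `L⁻_κ`:
a sequence in `ℓ⁻_{0κ}(ℝ^d)` solves the equation on `{n ≤ κ-1}` iff `φ(κ) ∈ ker P(κ)`
and, for each `n ≤ κ`, `φ(n)` lies in `ker P(n)` with `Φ(κ,n)φ(n) = φ(κ)` (i.e.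
`φ(n) = Φ(n,κ)φ(κ)` via the inverse of the restriction of `Φ(κ,n)` to `ker P(n)`). -/
theorem stmt_8 {d : ℕ} (κ : ℤ)
    (A : ℤ → (EuclideanSpace ℝ (Fin d) →L[ℝ] EuclideanSpace ℝ (Fin d)))
    (hA : ∃ C, ∀ n, ‖A n‖ ≤ C)
    (Φ : ℤ → ℤ → (EuclideanSpace ℝ (Fin d) →L[ℝ] EuclideanSpace ℝ (Fin d)))
    (hΦ0 : ∀ n, Φ n n = 1)
    (hΦ1 : ∀ k n : ℤ, n ≤ k → Φ (k + 1) n = (A k).comp (Φ k n))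
    (P : ℤ → (EuclideanSpace ℝ (Fin d) →L[ℝ] EuclideanSpace ℝ (Fin d)))
    (hproj : ∀ n ≤ κ, (P n).comp (P n) = P n)
    (hinva : ∀ n : ℤ, n + 1 ≤ κ → (P (n + 1)).comp (A n) = (A n).comp (P n))
    (hPbdd : ∃ C, ∀ n ≤ κ, ‖P n‖ ≤ C)
    (hreg : ∀ n : ℤ, n + 1 ≤ κ →
      Set.BijOn (A n) {x | P n x = 0} {x | P (n + 1) x = 0})
    (K α : ℝ) (hK : 1 ≤ K) (hα : α ∈ Set.Ioo (0 : ℝ) 1)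
    (hED1 : ∀ k n : ℤ, n ≤ k → k ≤ κ → ∀ x,
      ‖Φ k n (P n x)‖ ≤ K * α ^ (k - n) * ‖P n x‖)
    (hED2 : ∀ k n : ℤ, n ≤ k → k ≤ κ → ∀ x,
      ‖Φ k n (x - P n x)‖ ≥ (1 / K) * (1 / α) ^ (k - n) * ‖x - P n x‖)
    (φ : ℤ → EuclideanSpace ℝ (Fin d))
    (hφsupp : ∀ n : ℤ, κ < n → φ n = 0)
    (hφ0 : Filter.Tendsto φ Filter.atBot (nhds 0)) :
    (∀ n : ℤ, n < κ → φ (n + 1) = A n (φ n)) ↔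
      (P κ (φ κ) = 0 ∧ ∀ n ≤ κ, P n (φ n) = 0 ∧ Φ κ n (φ n) = φ κ) :=
  stmt_8_general κ A Φ hΦ0 hΦ1 P hinva hPbdd K α hK hα hED1 hED2 φ hφ0
end

section
/- Let X be a normed space, Λ a metric space, A : Λ × ℤ → L(ℝ^d) a family such that {A_n : Λ → L(ℝ^d)}_{n∈ℤ} is uniformly equicontinuous and uniformly bounded (which holds when Λ is compact and the family is equicontinuous and pointwise bounded). Then the Nemitski operator 𝒩_A : Λ → L(ℓ^∞(ℝ^d)), (𝒩_A(λ)φ)(n) := A_n(λ)φ(n), is well-defined, the map λ ↦ 𝒩_A(λ) is continuous in operator norm, and 𝒩_A(λ) maps ℓ_0(ℝ^d) into ℓ_0(ℝ^d) for each λ. -/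
/-- the Nemitski (substitution) operator of a uniformly equicontinuous,
uniformly bounded family of matrices is a well-defined, norm-continuous family of
bounded operators on `ℓ^∞(ℝ^d)` preserving `ℓ_0(ℝ^d)`. -/
theorem stmt_10 {d : ℕ} {Λ : Type*} [MetricSpace Λ]
    (A : Λ → ℤ → (EuclideanSpace ℝ (Fin d) →L[ℝ] EuclideanSpace ℝ (Fin d)))
    (hbdd : ∃ C, ∀ l n, ‖A l n‖ ≤ C)
    (hequi : ∀ ε > (0 : ℝ), ∃ δ > (0 : ℝ), ∀ l m : Λ, ∀ n : ℤ,
      dist l m < δ → ‖A l n - A m n‖ < ε) :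
    ∃ N : Λ → (BoundedContinuousFunction ℤ (EuclideanSpace ℝ (Fin d)) →L[ℝ]
        BoundedContinuousFunction ℤ (EuclideanSpace ℝ (Fin d))),
      (∀ l φ n, N l φ n = A l n (φ n)) ∧
      Continuous N ∧
      ∀ l (φ : BoundedContinuousFunction ℤ (EuclideanSpace ℝ (Fin d))),
        (Filter.Tendsto φ Filter.atTop (nhds 0) ∧ Filter.Tendsto φ Filter.atBot (nhds 0)) →
        (Filter.Tendsto (N l φ) Filter.atTop (nhds 0) ∧
          Filter.Tendsto (N l φ) Filter.atBot (nhds 0)) := by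
  obtain ⟨C, hC⟩ := hbdd
  set C' := max C 0 with hC'
  have hC'0 : 0 ≤ C' := le_max_right _ _
  have hC'le : ∀ l n, ‖A l n‖ ≤ C' := fun l n => le_trans (hC l n) (le_max_left _ _)
  -- the underlying bounded function
  have hptbd : ∀ (l : Λ) (φ : BoundedContinuousFunction ℤ (EuclideanSpace ℝ (Fin d))) (n : ℤ),
      ‖A l n (φ n)‖ ≤ C' * ‖φ‖ := by
    intro l φ n
    calc ‖A l n (φ n)‖ ≤ ‖A l n‖ * ‖φ n‖ := (A l n).le_opNorm _
    _ ≤ C' * ‖φ‖ := mul_le_mul (hC'le l n) (φ.norm_coe_le_norm n) (norm_nonneg _) hC'0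
  let F : Λ → BoundedContinuousFunction ℤ (EuclideanSpace ℝ (Fin d)) →ₗ[ℝ]
      BoundedContinuousFunction ℤ (EuclideanSpace ℝ (Fin d)) := fun l =>
    { toFun := fun φ => BoundedContinuousFunction.ofNormedAddCommGroup
        (fun n => A l n (φ n)) (continuous_of_discreteTopology) (C' * ‖φ‖) (hptbd l φ)
      map_add' := by intro φ ψ; ext n; simp
      map_smul' := by intro c φ; ext n; simp }
  have hFapp : ∀ l φ n, F l φ n = A l n (φ n) := fun l φ n => rfl
  let N : Λ → (BoundedContinuousFunction ℤ (EuclideanSpace ℝ (Fin d)) →L[ℝ]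
      BoundedContinuousFunction ℤ (EuclideanSpace ℝ (Fin d))) := fun l =>
    LinearMap.mkContinuous (F l) C' (fun φ => by
      apply BoundedContinuousFunction.norm_le (mul_nonneg hC'0 (norm_nonneg _)) |>.2
      intro n
      exact hptbd l φ n)
  refine ⟨N, fun l φ n => rfl, ?_, ?_⟩
  · refine Metric.continuous_iff (f := N) |>.mpr fun l ε hε => ?_
    obtain ⟨δ, hδ, hd⟩ := hequi (ε / 2) (by linarith)
    refine ⟨δ, hδ, fun m hm => ?_⟩
    rw [dist_eq_norm (N m) (N l)]
    have : ‖N m - N l‖ ≤ ε / 2 := by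
      apply ContinuousLinearMap.opNorm_le_bound _ (by linarith)
      intro φ
      apply BoundedContinuousFunction.norm_le (mul_nonneg (by linarith) (norm_nonneg _)) |>.2
      intro n
      have : ((N m - N l) φ) n = (A m n - A l n) (φ n) := by
        simp [N, hFapp, LinearMap.mkContinuous]
      rw [this]
      calc ‖(A m n - A l n) (φ n)‖ ≤ ‖A m n - A l n‖ * ‖φ n‖ := (A m n - A l n).le_opNorm _
      _ ≤ (ε / 2) * ‖φ‖ := mul_le_mul (le_of_lt (hd m l n hm)) (φ.norm_coe_le_norm n)
          (norm_nonneg _) (by linarith)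
    linarith
  · intro l φ ⟨h1, h2⟩
    have key : ∀ (f : Filter ℤ), Filter.Tendsto φ f (nhds 0) →
        Filter.Tendsto (N l φ) f (nhds 0) := by
      intro f hf
      rw [tendsto_zero_iff_norm_tendsto_zero] at hf ⊢
      refine squeeze_zero (fun n => norm_nonneg _) (fun n => ?_) (by simpa using hf.const_mul C')
      calc ‖(N l φ) n‖ = ‖A l n (φ n)‖ := rfl
      _ ≤ ‖A l n‖ * ‖φ n‖ := (A l n).le_opNorm _
      _ ≤ C' * ‖φ n‖ := mul_le_mul_of_nonneg_right (hC'le l n) (norm_nonneg _)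
    exact ⟨key _ h1, key _ h2⟩
end

section
/- Under the assumptions of the previous statement (f_n continuous, f_n(λ,0)=0, differentiable in the second variable with jointly continuous derivative, and the families {f_n}, {D₂f_n} equicontinuous with {D₂f_n} pointwise bounded on Λ × D(0,r₀) for some r₀ > 0), the Nemitski operator 𝒩_f : Λ × ℓ_0(ℝ^d) → ℓ_0(ℝ^d) is continuous and, for each fixed λ, Fréchet differentiable in the second variable with derivative (D₂𝒩_f(λ,φ)ψ)(n) = D₂f_n(λ,φ(n))ψ(n); moreover (λ,φ) ↦ D₂𝒩_f(λ,φ) is continuous into L(ℓ_0(ℝ^d)). -/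
/-
Outside the finite set of indices where `‖φ n‖ ≥ r₀ / 2`, every point `(λ, φ n)` has a whole
neighbourhood inside `Λ × D(0, r₀)`, where the families `f_n` and `D₂f_n` are uniformly
equicontinuous; on the finitely many remaining indices the continuity of each single `f_n`,
`D₂f_n` suffices. Hence `f_n` and `D₂f_n` are continuous at `(λ, φ n)` uniformly in `n`, which is
exactly continuity of `𝒩_f` and of `(λ, φ) ↦ D₂𝒩_f(λ, φ)` in the sup norm, and, through the mean
value inequality, a little-o remainder uniform in `n` for the derivative. Equicontinuity also
transports the pointwise bound on `D₂f_n(λ, 0)` to a bound along any `φ ∈ ℓ₀`, so that the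
substitution operator is bounded.
-/

open ZeroAtInfty Filter Metric Topology Set

theorem Metric.uniformEquicontinuousOn_iff {ι Y Z : Type*} [PseudoMetricSpace Y]
    [PseudoMetricSpace Z] {F : ι → Y → Z} {S : Set Y} :
    UniformEquicontinuousOn F S ↔ ∀ ε > 0, ∃ δ > 0, ∀ x ∈ S, ∀ y ∈ S, dist x y < δ →
      ∀ i, dist (F i x) (F i y) < ε := by
  rw [(uniformity_basis_dist.inf_principal (S ×ˢ S)).uniformEquicontinuousOn_iff
    uniformity_basis_dist]
  simp only [mem_inter_iff, mem_ofPred_eq, mem_prod, and_imp]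
  grind

theorem uniformEquicontinuousOn_uncurry {ι X Y Z : Type*} [PseudoMetricSpace X]
    [PseudoMetricSpace Y] [PseudoMetricSpace Z] {F : ι → X → Y → Z} {t : Set Y}
    (hF : ∀ ε > 0, ∃ δ > 0, ∀ i x₁ x₂ y₁ y₂, y₁ ∈ t → y₂ ∈ t → dist x₁ x₂ < δ →
      dist y₁ y₂ < δ → dist (F i x₁ y₁) (F i x₂ y₂) < ε) :
    UniformEquicontinuousOn (fun i (p : X × Y) => F i p.1 p.2) (univ ×ˢ t) := by
  refine Metric.uniformEquicontinuousOn_iff.2 fun ε hε => ?_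
  obtain ⟨δ, hδ, hδF⟩ := hF ε hε
  refine ⟨δ, hδ, fun p hp q hq hpq i => ?_⟩
  rw [Prod.dist_eq, max_lt_iff] at hpq
  exact hδF i p.1 q.1 p.2 q.2 hp.2 hq.2 hpq.1 hpq.2

section Equicontinuity

variable {ι Y Z : Type*} [PseudoMetricSpace Y] [PseudoMetricSpace Z]

theorem UniformEquicontinuousOn.exists_forall_dist_lt {F : ι → Y → Z} {S : Set Y}
    (hF : UniformEquicontinuousOn F S) {u : ι → Y} {T : Set ι} (hT : T.Finite)
    (hcont : ∀ i ∈ T, ContinuousAt (F i) (u i)) {ρ : ℝ} (hρ : 0 < ρ)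
    (hS : ∀ i ∉ T, ball (u i) ρ ⊆ S) {ε : ℝ} (hε : 0 < ε) :
    ∃ δ > 0, ∀ i y, dist y (u i) < δ → dist (F i y) (F i (u i)) < ε := by
  obtain ⟨δ₀, hδ₀, hδ₀F⟩ := Metric.uniformEquicontinuousOn_iff.1 hF ε hε
  have hfar : ∀ᶠ δ in 𝓝 (0 : ℝ), ∀ i ∉ T, ∀ y, dist y (u i) < δ →
      dist (F i y) (F i (u i)) < ε := by
    filter_upwards [Iio_mem_nhds (lt_min hδ₀ hρ)] with δ hδ i hi y hy
    have hyδ := hy.trans hδ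
    exact hδ₀F y (hS i hi (mem_ball.2 (hyδ.trans_le (min_le_right _ _))))
      (u i) (hS i hi (mem_ball_self hρ)) (hyδ.trans_le (min_le_left _ _)) i
  have hnear : ∀ᶠ δ in 𝓝 (0 : ℝ), ∀ i ∈ T, ∀ y, dist y (u i) < δ →
      dist (F i y) (F i (u i)) < ε := by
    refine (eventually_all_finite hT).2 fun i hi => ?_
    obtain ⟨δ, hδ, hFi⟩ := Metric.continuousAt_iff.1 (hcont i hi) ε hε
    filter_upwards [Iio_mem_nhds hδ] with δ' hδ' y hy using hFi (hy.trans hδ')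
  obtain ⟨δ, ⟨hδfar, hδnear⟩, hδ⟩ :=
    ((hfar.and hnear).filter_mono nhdsWithin_le_nhds |>.and self_mem_nhdsWithin).exists
      (f := 𝓝[>] (0 : ℝ))
  exact ⟨δ, hδ, fun i => (em (i ∈ T)).elim (hδnear i) (hδfar i)⟩

end Equicontinuity

namespace ZeroAtInftyContinuousMap

section Norm

variable {α E : Type*} [TopologicalSpace α] [NormedAddCommGroup E]

theorem norm_apply_le (φ : C₀(α, E)) (x : α) : ‖φ x‖ ≤ ‖φ‖ := by
  simpa [norm_toBCF_eq_norm] using φ.toBCF.norm_coe_le_norm x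

theorem dist_apply_le (φ ψ : C₀(α, E)) (x : α) : dist (φ x) (ψ x) ≤ dist φ ψ := by
  simpa [dist_toBCF_eq_dist] using φ.toBCF.dist_coe_le_dist (g := ψ.toBCF) x

theorem norm_le {φ : C₀(α, E)} {C : ℝ} (hC : 0 ≤ C) : ‖φ‖ ≤ C ↔ ∀ x, ‖φ x‖ ≤ C := by
  simpa [norm_toBCF_eq_norm] using BoundedContinuousFunction.norm_le (f := φ.toBCF) hC

theorem dist_le {φ ψ : C₀(α, E)} {C : ℝ} (hC : 0 ≤ C) :
    dist φ ψ ≤ C ↔ ∀ x, dist (φ x) (ψ x) ≤ C := by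
  simpa [dist_toBCF_eq_dist] using
    BoundedContinuousFunction.dist_le (f := φ.toBCF) (g := ψ.toBCF) hC

end Norm

variable {ι E G : Type*} [TopologicalSpace ι] [DiscreteTopology ι]
  [NormedAddCommGroup E] [NormedAddCommGroup G]

def ofTendstoCofinite (g : ι → E) (hg : Tendsto g cofinite (𝓝 0)) : C₀(ι, E) :=
  ⟨⟨g, continuous_of_discreteTopology⟩, by rwa [cocompact_eq_cofinite]⟩

@[simp]
theorem ofTendstoCofinite_apply (g : ι → E) (hg : Tendsto g cofinite (𝓝 0)) (i : ι) :
    ofTendstoCofinite g hg i = g i :=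
  rfl

theorem tendsto_cofinite (φ : C₀(ι, E)) : Tendsto φ cofinite (𝓝 0) := by
  simpa [cocompact_eq_cofinite] using zero_at_infty φ

theorem eventually_norm_lt (φ : C₀(ι, E)) {c : ℝ} (hc : 0 < c) : ∀ᶠ i in cofinite, ‖φ i‖ < c := by
  simpa using (tendsto_cofinite φ).eventually (ball_mem_nhds 0 hc)

theorem finite_setOf_le_norm (φ : C₀(ι, E)) {c : ℝ} (hc : 0 < c) : {i | c ≤ ‖φ i‖}.Finite := by
  simpa using eventually_cofinite.1 (eventually_norm_lt φ hc)

variable {𝕜 : Type*} [NontriviallyNormedField 𝕜] [NormedSpace 𝕜 E] [NormedSpace 𝕜 G]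

noncomputable def pointwiseCLM (A : ι → E →L[𝕜] G) (hA : BddAbove (range fun i => ‖A i‖)) :
    C₀(ι, E) →L[𝕜] C₀(ι, G) :=
  LinearMap.mkContinuous
    { toFun := fun ψ => ofTendstoCofinite (fun i => A i (ψ i)) <| by
        obtain ⟨C, hC⟩ := hA
        refine squeeze_zero_norm (fun i => ?_)
          (by simpa using (tendsto_cofinite ψ).norm.const_mul C)
        exact (A i).le_opNorm (ψ i) |>.trans <|
          mul_le_mul_of_nonneg_right (hC (mem_range_self i)) (norm_nonneg _)
      map_add' := fun ψ₁ ψ₂ => by ext; simp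
      map_smul' := fun c ψ => by ext; simp }
    (⨆ i, ‖A i‖) fun ψ => by
      have hC : 0 ≤ ⨆ i, ‖A i‖ := Real.iSup_nonneg fun i => norm_nonneg _
      refine (norm_le (by positivity)).2 fun i => ?_
      calc ‖A i (ψ i)‖ ≤ ‖A i‖ * ‖ψ i‖ := (A i).le_opNorm _
        _ ≤ (⨆ i, ‖A i‖) * ‖ψ‖ :=
          mul_le_mul (le_ciSup hA i) (norm_apply_le ψ i) (norm_nonneg _) hC

@[simp]
theorem pointwiseCLM_apply (A : ι → E →L[𝕜] G) (hA : BddAbove (range fun i => ‖A i‖))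
    (ψ : C₀(ι, E)) (i : ι) : pointwiseCLM A hA ψ i = A i (ψ i) :=
  rfl

theorem dist_pointwiseCLM_le {A B : ι → E →L[𝕜] G} (hA : BddAbove (range fun i => ‖A i‖))
    (hB : BddAbove (range fun i => ‖B i‖)) {C : ℝ} (hC : 0 ≤ C) (hAB : ∀ i, dist (A i) (B i) ≤ C) :
    dist (pointwiseCLM A hA) (pointwiseCLM B hB) ≤ C := by
  rw [dist_eq_norm (pointwiseCLM A hA)]
  refine ContinuousLinearMap.opNorm_le_bound _ hC fun ψ => (norm_le (by positivity)).2 fun i => ?_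
  calc ‖(pointwiseCLM A hA - pointwiseCLM B hB) ψ i‖ = ‖(A i - B i) (ψ i)‖ := by simp
    _ ≤ ‖A i - B i‖ * ‖ψ i‖ := (A i - B i).le_opNorm _
    _ ≤ C * ‖ψ‖ :=
      mul_le_mul (dist_eq_norm (A i) (B i) ▸ hAB i) (norm_apply_le ψ i) (norm_nonneg _) hC

end ZeroAtInftyContinuousMap

section Nemytskii

open ZeroAtInftyContinuousMap

variable {ι Λ E Z G : Type*} [TopologicalSpace ι] [DiscreteTopology ι] [PseudoMetricSpace Λ]
  [NormedAddCommGroup E] [PseudoMetricSpace Z] [NormedAddCommGroup G]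

theorem UniformEquicontinuousOn.eventually_dist_apply_zero_lt {F : ι → Λ × E → Z} {r : ℝ}
    (hr : 0 < r) (hF : UniformEquicontinuousOn F (univ ×ˢ closedBall 0 r)) (l : Λ)
    (φ : C₀(ι, E)) {ε : ℝ} (hε : 0 < ε) :
    ∀ᶠ i in cofinite, dist (F i (l, φ i)) (F i (l, 0)) < ε := by
  obtain ⟨δ, hδ, hδF⟩ := Metric.uniformEquicontinuousOn_iff.1 hF ε hε
  filter_upwards [eventually_norm_lt φ (lt_min hδ hr)] with i hi
  refine hδF (l, φ i) ⟨trivial, ?_⟩ (l, 0) ⟨trivial, by simpa using hr.le⟩ ?_ i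
  · simpa using (hi.trans_le (min_le_right _ _)).le
  · simpa [Prod.dist_eq] using hi.trans_le (min_le_left _ _)

theorem UniformEquicontinuousOn.tendsto_cofinite_apply {F : ι → Λ × E → G} {r : ℝ}
    (hr : 0 < r) (hF : UniformEquicontinuousOn F (univ ×ˢ closedBall 0 r))
    (hF0 : ∀ i l, F i (l, 0) = 0) (l : Λ) (φ : C₀(ι, E)) :
    Tendsto (fun i => F i (l, φ i)) cofinite (𝓝 0) :=
  Metric.tendsto_nhds.2 fun ε hε => by
    simpa [hF0] using hF.eventually_dist_apply_zero_lt hr l φ hε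

theorem UniformEquicontinuousOn.bddAbove_range_norm_apply {F : ι → Λ × E → G} {r : ℝ}
    (hr : 0 < r) (hF : UniformEquicontinuousOn F (univ ×ˢ closedBall 0 r)) {l : Λ}
    (hl : BddAbove (range fun i => ‖F i (l, 0)‖)) (φ : C₀(ι, E)) :
    BddAbove (range fun i => ‖F i (l, φ i)‖) := by
  obtain ⟨C, hC⟩ := hl
  refine IsBoundedUnder.bddAbove_range_of_cofinite ⟨C + 1, eventually_map.2 ?_⟩
  filter_upwards [hF.eventually_dist_apply_zero_lt hr l φ one_pos] with i hi
  calc ‖F i (l, φ i)‖ ≤ ‖F i (l, 0)‖ + dist (F i (l, φ i)) (F i (l, 0)) := by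
        simpa [dist_eq_norm] using norm_le_insert' (F i (l, φ i)) (F i (l, 0))
    _ ≤ C + 1 := add_le_add (hC (mem_range_self i)) hi.le

theorem UniformEquicontinuousOn.exists_forall_dist_apply_lt {F : ι → Λ × E → Z} {r : ℝ}
    (hr : 0 < r) (hF : UniformEquicontinuousOn F (univ ×ˢ closedBall 0 r))
    (hc : ∀ i, Continuous (F i)) (l₀ : Λ) (φ : C₀(ι, E)) {ε : ℝ} (hε : 0 < ε) :
    ∃ δ > 0, ∀ i p, dist p (l₀, φ i) < δ → dist (F i p) (F i (l₀, φ i)) < ε := by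
  refine hF.exists_forall_dist_lt (finite_setOf_le_norm φ (half_pos hr))
    (fun i _ => (hc i).continuousAt) (half_pos hr) (fun i hi p hp => ⟨trivial, ?_⟩) hε
  rw [mem_ball, Prod.dist_eq, max_lt_iff] at hp
  have hφ : ‖φ i‖ < r / 2 := by simpa using hi
  rw [mem_closedBall_zero_iff]
  calc ‖p.2‖ ≤ ‖φ i‖ + dist p.2 (φ i) := by
        simpa [dist_eq_norm] using norm_le_insert' p.2 (φ i)
    _ ≤ r := by linarith [hp.2]

end Nemytskii

namespace ZeroAtInftyContinuousMap

variable {ι Λ E G : Type*} [TopologicalSpace ι] [DiscreteTopology ι] [PseudoMetricSpace Λ]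
  [NormedAddCommGroup E] [NormedAddCommGroup G]

theorem dist_prodMk_apply_le {α : Type*} [TopologicalSpace α] (p q : Λ × C₀(α, E)) (x : α) :
    dist (p.1, p.2 x) (q.1, q.2 x) ≤ dist p q := by
  simp only [Prod.dist_eq]
  exact max_le_max le_rfl (dist_apply_le p.2 q.2 x)

noncomputable def nemytskii (F : ι → Λ × E → G)
    (hF : ∀ l (φ : C₀(ι, E)), Tendsto (fun i => F i (l, φ i)) cofinite (𝓝 0)) :
    Λ × C₀(ι, E) → C₀(ι, G) :=
  fun p => ofTendstoCofinite (fun i => F i (p.1, p.2 i)) (hF p.1 p.2)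

variable {r : ℝ}

theorem continuous_nemytskii {F : ι → Λ × E → G} (hr : 0 < r)
    (hF : UniformEquicontinuousOn F (univ ×ˢ closedBall 0 r)) (hc : ∀ i, Continuous (F i))
    (hF0 : ∀ l (φ : C₀(ι, E)), Tendsto (fun i => F i (l, φ i)) cofinite (𝓝 0)) :
    Continuous (nemytskii F hF0) := by
  refine Metric.continuous_iff.2 fun p₀ ε hε => ?_
  obtain ⟨δ, hδ, hδF⟩ := hF.exists_forall_dist_apply_lt hr hc p₀.1 p₀.2 (half_pos hε)
  refine ⟨δ, hδ, fun p hp => ?_⟩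
  refine ((dist_le (half_pos hε).le).2 fun i => ?_).trans_lt (half_lt_self hε)
  exact (hδF i _ ((dist_prodMk_apply_le p p₀ i).trans_lt hp)).le

variable {𝕜 : Type*} [NontriviallyNormedField 𝕜] [NormedSpace 𝕜 E] [NormedSpace 𝕜 G]

theorem continuous_pointwiseCLM {A : ι → Λ × E → E →L[𝕜] G} (hr : 0 < r)
    (hA : UniformEquicontinuousOn A (univ ×ˢ closedBall 0 r)) (hc : ∀ i, Continuous (A i))
    (hB : ∀ l (φ : C₀(ι, E)), BddAbove (range fun i => ‖A i (l, φ i)‖)) :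
    Continuous fun p : Λ × C₀(ι, E) => pointwiseCLM (fun i => A i (p.1, p.2 i)) (hB p.1 p.2) := by
  refine (Metric.continuous_iff (β := C₀(ι, E) →L[𝕜] C₀(ι, G))).2 fun p₀ ε hε => ?_
  obtain ⟨δ, hδ, hδA⟩ := hA.exists_forall_dist_apply_lt hr hc p₀.1 p₀.2 (half_pos hε)
  refine ⟨δ, hδ, fun p hp => ?_⟩
  refine (dist_pointwiseCLM_le _ _ (half_pos hε).le fun i => ?_).trans_lt (half_lt_self hε)
  exact (hδA i _ ((dist_prodMk_apply_le p p₀ i).trans_lt hp)).le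

theorem hasFDerivAt_nemytskii [NormedSpace ℝ E] [NormedSpace ℝ G] {F : ι → Λ × E → G}
    {D : ι → Λ × E → E →L[ℝ] G}
    (hF0 : ∀ l (φ : C₀(ι, E)), Tendsto (fun i => F i (l, φ i)) cofinite (𝓝 0))
    (hD : ∀ i l x, HasFDerivAt (fun y => F i (l, y)) (D i (l, x)) x) (hr : 0 < r)
    (hDe : UniformEquicontinuousOn D (univ ×ˢ closedBall 0 r)) (hDc : ∀ i, Continuous (D i))
    (hB : ∀ l (φ : C₀(ι, E)), BddAbove (range fun i => ‖D i (l, φ i)‖)) (l : Λ) (φ : C₀(ι, E)) :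
    HasFDerivAt (fun ψ => nemytskii F hF0 (l, ψ)) (pointwiseCLM (fun i => D i (l, φ i)) (hB l φ))
      φ := by
  rw [hasFDerivAt_iff_isLittleO_nhds_zero, Asymptotics.isLittleO_iff]
  intro c hc
  obtain ⟨δ, hδ, hδD⟩ := hDe.exists_forall_dist_apply_lt hr hDc l φ hc
  filter_upwards [ball_mem_nhds 0 hδ] with h hh
  rw [mem_ball_zero_iff] at hh
  refine (norm_le (by positivity)).2 fun i => ?_
  have hhi : φ i + h i ∈ ball (φ i) δ := by
    simpa [dist_eq_norm] using (norm_apply_le h i).trans_lt hh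
  have hD_near : ∀ y ∈ ball (φ i) δ, ‖D i (l, y) - D i (l, φ i)‖ ≤ c := fun y hy => by
    rw [← dist_eq_norm]
    exact (hδD i (l, y) (by simpa [Prod.dist_eq] using hy)).le
  have hmv := (convex_ball (φ i) δ).norm_image_sub_le_of_norm_hasFDerivWithin_le'
    (fun y _ => (hD i l y).hasFDerivWithinAt) hD_near (mem_ball_self hδ) hhi
  rw [add_sub_cancel_left] at hmv
  exact hmv.trans (mul_le_mul_of_nonneg_left (norm_apply_le h i) hc.le)

end ZeroAtInftyContinuousMap

open ZeroAtInftyContinuousMap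

theorem stmt_12_general {d : ℕ} {Λ : Type*} [MetricSpace Λ]
    (f : ℤ → Λ → EuclideanSpace ℝ (Fin d) → EuclideanSpace ℝ (Fin d))
    (hfc : ∀ n, Continuous fun p : Λ × EuclideanSpace ℝ (Fin d) => f n p.1 p.2)
    (hf0 : ∀ n l, f n l 0 = 0)
    (Df : ℤ → Λ → EuclideanSpace ℝ (Fin d) →
      (EuclideanSpace ℝ (Fin d) →L[ℝ] EuclideanSpace ℝ (Fin d)))
    (hDf : ∀ n l x, HasFDerivAt (f n l) (Df n l x) x)
    (hDfc : ∀ n, Continuous fun p : Λ × EuclideanSpace ℝ (Fin d) => Df n p.1 p.2)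
    (r₀ : ℝ) (hr₀ : 0 < r₀)
    (hequif : ∀ ε > (0 : ℝ), ∃ δ > (0 : ℝ), ∀ (n : ℤ) (l₁ l₂ : Λ)
      (x₁ x₂ : EuclideanSpace ℝ (Fin d)), ‖x₁‖ ≤ r₀ → ‖x₂‖ ≤ r₀ →
      dist l₁ l₂ < δ → dist x₁ x₂ < δ → dist (f n l₁ x₁) (f n l₂ x₂) < ε)
    (hequiD : ∀ ε > (0 : ℝ), ∃ δ > (0 : ℝ), ∀ (n : ℤ) (l₁ l₂ : Λ)
      (x₁ x₂ : EuclideanSpace ℝ (Fin d)), ‖x₁‖ ≤ r₀ → ‖x₂‖ ≤ r₀ →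
      dist l₁ l₂ < δ → dist x₁ x₂ < δ → dist (Df n l₁ x₁) (Df n l₂ x₂) < ε)
    (hptbdd : ∀ (l : Λ) (x : EuclideanSpace ℝ (Fin d)), ‖x‖ ≤ r₀ →
      ∃ C, ∀ n, ‖Df n l x‖ ≤ C) :
    ∃ N : Λ × C₀(ℤ, EuclideanSpace ℝ (Fin d)) → C₀(ℤ, EuclideanSpace ℝ (Fin d)),
      (∀ l φ (n : ℤ), N (l, φ) n = f n l (φ n)) ∧
      Continuous N ∧
      ∃ DN : Λ × C₀(ℤ, EuclideanSpace ℝ (Fin d)) →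
          (C₀(ℤ, EuclideanSpace ℝ (Fin d)) →L[ℝ] C₀(ℤ, EuclideanSpace ℝ (Fin d))),
        (∀ l φ ψ (n : ℤ), DN (l, φ) ψ n = Df n l (φ n) (ψ n)) ∧
        (∀ l φ, HasFDerivAt (fun ψ => N (l, ψ)) (DN (l, φ)) φ) ∧
        Continuous DN := by
  have hfe := uniformEquicontinuousOn_uncurry (F := f) (t := closedBall 0 r₀)
    (by simpa only [mem_closedBall_zero_iff] using hequif)
  have hDe := uniformEquicontinuousOn_uncurry (F := Df) (t := closedBall 0 r₀)
    (by simpa only [mem_closedBall_zero_iff] using hequiD)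
  have hN := hfe.tendsto_cofinite_apply hr₀ fun n l => hf0 n l
  have hB : ∀ l (φ : C₀(ℤ, EuclideanSpace ℝ (Fin d))),
      BddAbove (range fun n => ‖Df n l (φ n)‖) := fun l φ => by
    obtain ⟨C, hC⟩ := hptbdd l 0 (by simpa using hr₀.le)
    exact hDe.bddAbove_range_norm_apply hr₀ ⟨C, forall_mem_range.2 hC⟩ φ
  exact ⟨nemytskii _ hN, fun _ _ _ => rfl, continuous_nemytskii hr₀ hfe hfc hN,
    fun p => pointwiseCLM _ (hB p.1 p.2), fun _ _ _ _ => rfl,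
    hasFDerivAt_nemytskii hN hDf hr₀ hDe hDfc hB, continuous_pointwiseCLM hr₀ hDe hDfc hB⟩

/-- the Nemitski operator `𝒩_f : Λ × ℓ_0(ℝ^d) → ℓ_0(ℝ^d)` is continuous,
Fréchet differentiable in the second variable with derivative the substitution operator
by `D₂f_n(λ, φ(n))`, and this derivative depends continuously on `(λ, φ)`. -/
theorem stmt_12 {d : ℕ} {Λ : Type*} [MetricSpace Λ] [CompactSpace Λ]
    (f : ℤ → Λ → EuclideanSpace ℝ (Fin d) → EuclideanSpace ℝ (Fin d))
    (hfc : ∀ n, Continuous fun p : Λ × EuclideanSpace ℝ (Fin d) => f n p.1 p.2)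
    (hf0 : ∀ n l, f n l 0 = 0)
    (Df : ℤ → Λ → EuclideanSpace ℝ (Fin d) →
      (EuclideanSpace ℝ (Fin d) →L[ℝ] EuclideanSpace ℝ (Fin d)))
    (hDf : ∀ n l x, HasFDerivAt (f n l) (Df n l x) x)
    (hDfc : ∀ n, Continuous fun p : Λ × EuclideanSpace ℝ (Fin d) => Df n p.1 p.2)
    (r₀ : ℝ) (hr₀ : 0 < r₀)
    (hequif : ∀ ε > (0 : ℝ), ∃ δ > (0 : ℝ), ∀ (n : ℤ) (l₁ l₂ : Λ)
      (x₁ x₂ : EuclideanSpace ℝ (Fin d)), ‖x₁‖ ≤ r₀ → ‖x₂‖ ≤ r₀ →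
      dist l₁ l₂ < δ → dist x₁ x₂ < δ → dist (f n l₁ x₁) (f n l₂ x₂) < ε)
    (hequiD : ∀ ε > (0 : ℝ), ∃ δ > (0 : ℝ), ∀ (n : ℤ) (l₁ l₂ : Λ)
      (x₁ x₂ : EuclideanSpace ℝ (Fin d)), ‖x₁‖ ≤ r₀ → ‖x₂‖ ≤ r₀ →
      dist l₁ l₂ < δ → dist x₁ x₂ < δ → dist (Df n l₁ x₁) (Df n l₂ x₂) < ε)
    (hptbdd : ∀ (l : Λ) (x : EuclideanSpace ℝ (Fin d)), ‖x‖ ≤ r₀ →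
      ∃ C, ∀ n, ‖Df n l x‖ ≤ C) :
    ∃ N : Λ × C₀(ℤ, EuclideanSpace ℝ (Fin d)) → C₀(ℤ, EuclideanSpace ℝ (Fin d)),
      (∀ l φ (n : ℤ), N (l, φ) n = f n l (φ n)) ∧
      Continuous N ∧
      ∃ DN : Λ × C₀(ℤ, EuclideanSpace ℝ (Fin d)) →
          (C₀(ℤ, EuclideanSpace ℝ (Fin d)) →L[ℝ] C₀(ℤ, EuclideanSpace ℝ (Fin d))),
        (∀ l φ ψ (n : ℤ), DN (l, φ) ψ n = Df n l (φ n) (ψ n)) ∧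
        (∀ l φ, HasFDerivAt (fun ψ => N (l, ψ)) (DN (l, φ)) φ) ∧
        Continuous DN :=
  stmt_12_general f hfc hf0 Df hDf hDfc r₀ hr₀ hequif hequiD hptbdd
end
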